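/- Per-horizon contraction of the estimation error (Eq. (13)): Let A in R^{n x n}, C in R^{p x n}, and suppose there exist c_beta >= 1, lambda_beta in (0,1), c_gamma > 0 such that for every d in R^n and tau in N: |A^tau d| <= max( c_beta lambda_beta^tau |d| , c_gamma max_{0 <= k <= tau-1} |C A^k d| ). Let p1, p2, r1, r2, rho, L be positive with p1 <= p2, r1 <= r2, L >= 1, and let lambda in (0,1) satisfy 2 c_beta lambda_beta^{L-1} sqrt(2 p2/p1) <= lambda and 2 c_gamma sqrt(2 rho p2 / r1) <= lambda. Let e0, ehat0 in R^n, d = ehat0 + e0, and sigmahat(0),...,sigmahat(L-1), v(0),...,v(L-1) in R^p satisfy: (i) C A^k d = v(k) - sigmahat(k) for all 0 <= k <= L-1; (ii) |ehat0| <= max( sqrt(2 p2/p1) |e0| , sqrt(2 L r2/(rho p1)) V ); (iii) max_{0<=k<=L-1} |sigmahat(k)| <= max( sqrt(2 rho p2 / r1) |e0| , sqrt(2 L r2 / r1) V ), where V = max_{0<=k<=L-1} |v(k)|. Then, with c_e = max( 2 c_beta sqrt(2 L r2/(rho p1)) , 2 c_gamma sqrt(2 L r2/r1) ): |A^{L-1}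 d| <= max( lambda |e0| , c_e V ). -/

import Mathlib

open Matrix BigOperators

/-- Euclidean norm of a vector in `Fin k → ℝ`. -/
noncomputable def enorm {k : ℕ} (s : Fin k → ℝ) : ℝ := Real.sqrt (∑ i, s i ^ 2)

/-- Maximum of `f 0, …, f (τ-1)`, taken as `0` for `τ = 0`. -/
noncomputable def maxUpTo (τ : ℕ) (f : ℕ → ℝ) : ℝ := (Finset.range τ).fold max 0 f

lemma enorm_eq {k : ℕ} (s : Fin k → ℝ) :
    _root_.enorm s = ‖(WithLp.equiv 2 (Fin k → ℝ)).symm s‖ := by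
  rw [EuclideanSpace.norm_eq]
  simp [_root_.enorm, Real.norm_eq_abs, sq_abs]

lemma enorm_nonneg' {k : ℕ} (s : Fin k → ℝ) : 0 ≤ _root_.enorm s := Real.sqrt_nonneg _

lemma enorm_add_le_r {k : ℕ} (a b : Fin k → ℝ) : _root_.enorm (a + b) ≤ _root_.enorm a + _root_.enorm b := by
  simp only [enorm_eq]
  rw [show (WithLp.equiv 2 (Fin k → ℝ)).symm (a + b)
      = (WithLp.equiv 2 (Fin k → ℝ)).symm a + (WithLp.equiv 2 (Fin k → ℝ)).symm b from rfl]
  exact norm_add_le _ _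

lemma enorm_sub_le_r {k : ℕ} (a b : Fin k → ℝ) : _root_.enorm (a - b) ≤ _root_.enorm a + _root_.enorm b := by
  simp only [enorm_eq]
  rw [show (WithLp.equiv 2 (Fin k → ℝ)).symm (a - b)
      = (WithLp.equiv 2 (Fin k → ℝ)).symm a - (WithLp.equiv 2 (Fin k → ℝ)).symm b from rfl]
  exact norm_sub_le _ _

lemma maxUpTo_nonneg (τ : ℕ) (f : ℕ → ℝ) : 0 ≤ maxUpTo τ f :=
  (Finset.le_fold_max _).mpr (Or.inl le_rfl)

lemma le_maxUpTo {τ k : ℕ} (f : ℕ → ℝ) (h : k < τ) : f k ≤ maxUpTo τ f :=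
  (Finset.le_fold_max _).mpr (Or.inr ⟨k, Finset.mem_range.mpr h, le_rfl⟩)

lemma maxUpTo_le {τ : ℕ} {f : ℕ → ℝ} {c : ℝ} (hc : 0 ≤ c)
    (h : ∀ k < τ, f k ≤ c) : maxUpTo τ f ≤ c :=
  (Finset.fold_max_le _).mpr ⟨hc, fun k hk => h k (Finset.mem_range.mp hk)⟩

set_option maxHeartbeats 1000000 in
/-- Per-horizon contraction of the estimation error (Eq. (13)). -/
theorem per_horizon_contraction
    {n p : ℕ} (A : Matrix (Fin n) (Fin n) ℝ) (C : Matrix (Fin p) (Fin n) ℝ)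
    (cbeta lambeta cgamma : ℝ) (hcbeta : 1 ≤ cbeta)
    (hlambeta : lambeta ∈ Set.Ioo (0 : ℝ) 1) (hcgamma : 0 < cgamma)
    (huoss : ∀ (d : Fin n → ℝ) (τ : ℕ),
      _root_.enorm ((A ^ τ).mulVec d) ≤
        max (cbeta * lambeta ^ τ * _root_.enorm d)
          (cgamma * maxUpTo τ (fun k => _root_.enorm (C.mulVec ((A ^ k).mulVec d)))))
    (p1 p2 r1 r2 ρ : ℝ) (L : ℕ)
    (hp1 : 0 < p1) (hp2 : 0 < p2) (hr1 : 0 < r1) (hr2 : 0 < r2) (hρ : 0 < ρ)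
    (hL : 1 ≤ L) (hp12 : p1 ≤ p2) (hr12 : r1 ≤ r2)
    (lam : ℝ) (hlam : lam ∈ Set.Ioo (0 : ℝ) 1)
    (hlam1 : 2 * cbeta * lambeta ^ (L - 1) * Real.sqrt (2 * p2 / p1) ≤ lam)
    (hlam2 : 2 * cgamma * Real.sqrt (2 * ρ * p2 / r1) ≤ lam)
    (e0 ehat0 d : Fin n → ℝ) (hd : d = ehat0 + e0)
    (σhat v : ℕ → Fin p → ℝ)
    (hout : ∀ k, k < L → C.mulVec ((A ^ k).mulVec d) = v k - σhat k)
    (hehat0 : _root_.enorm ehat0 ≤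
      max (Real.sqrt (2 * p2 / p1) * _root_.enorm e0)
        (Real.sqrt (2 * (L : ℝ) * r2 / (ρ * p1)) * maxUpTo L (fun k => _root_.enorm (v k))))
    (hσhat : maxUpTo L (fun k => _root_.enorm (σhat k)) ≤
      max (Real.sqrt (2 * ρ * p2 / r1) * _root_.enorm e0)
        (Real.sqrt (2 * (L : ℝ) * r2 / r1) * maxUpTo L (fun k => _root_.enorm (v k)))) :
    _root_.enorm ((A ^ (L - 1)).mulVec d) ≤
      max (lam * _root_.enorm e0)
        (max (2 * cbeta * Real.sqrt (2 * (L : ℝ) * r2 / (ρ * p1)))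
            (2 * cgamma * Real.sqrt (2 * (L : ℝ) * r2 / r1)) *
          maxUpTo L (fun k => _root_.enorm (v k))) := by
  set V := maxUpTo L (fun k => _root_.enorm (v k)) with hVdef
  set S := maxUpTo L (fun k => _root_.enorm (σhat k)) with hSdef
  set sa := Real.sqrt (2 * p2 / p1) with hsa
  set sb := Real.sqrt (2 * (L : ℝ) * r2 / (ρ * p1)) with hsb
  set sc := Real.sqrt (2 * ρ * p2 / r1) with hsc
  set se := Real.sqrt (2 * (L : ℝ) * r2 / r1) with hse
  have hVnn : 0 ≤ V := maxUpTo_nonneg _ _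
  have hSnn : 0 ≤ S := maxUpTo_nonneg _ _
  have he0nn : 0 ≤ _root_.enorm e0 := enorm_nonneg' _
  have hlbnn : (0:ℝ) ≤ lambeta ^ (L - 1) := le_of_lt (pow_pos hlambeta.1 _)
  have hlble1 : lambeta ^ (L - 1) ≤ 1 := pow_le_one₀ hlambeta.1.le hlambeta.2.le
  have hbnn : 0 ≤ sb := Real.sqrt_nonneg _
  have hcnn : 0 ≤ sc := Real.sqrt_nonneg _
  have hLR : (1:ℝ) ≤ (L : ℝ) := by exact_mod_cast hL
  have ha1 : 1 ≤ sa := by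
    rw [hsa, show (1:ℝ) = Real.sqrt 1 from (Real.sqrt_one).symm]
    apply Real.sqrt_le_sqrt
    rw [le_div_iff₀ hp1]; nlinarith
  have he1 : 1 ≤ se := by
    rw [hse, show (1:ℝ) = Real.sqrt 1 from (Real.sqrt_one).symm]
    apply Real.sqrt_le_sqrt
    rw [le_div_iff₀ hr1]; nlinarith
  have hdle : _root_.enorm d ≤ 2 * max (sa * _root_.enorm e0) (sb * V) := by
    have h1 : _root_.enorm d ≤ _root_.enorm ehat0 + _root_.enorm e0 := hd ▸ enorm_add_le_r _ _
    have h2 : _root_.enorm e0 ≤ max (sa * _root_.enorm e0) (sb * V) := by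
      refine le_trans ?_ (le_max_left _ _)
      nlinarith [mul_le_mul_of_nonneg_right ha1 he0nn]
    linarith [hehat0]
  have hVS : V + S ≤ 2 * max (sc * _root_.enorm e0) (se * V) := by
    have h2 : V ≤ max (sc * _root_.enorm e0) (se * V) := by
      refine le_trans ?_ (le_max_right _ _)
      nlinarith [mul_le_mul_of_nonneg_right he1 hVnn]
    linarith [hσhat]
  have hCbound : maxUpTo (L - 1) (fun k => _root_.enorm (C.mulVec ((A ^ k).mulVec d))) ≤ V + S := by
    apply maxUpTo_le (by linarith)
    intro k hk
    have hkL : k < L := lt_of_lt_of_le hk (Nat.sub_le L 1)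
    simp only [hout k hkL]
    exact le_trans (enorm_sub_le_r _ _)
      (add_le_add (le_maxUpTo (fun k => _root_.enorm (v k)) hkL)
        (le_maxUpTo (fun k => _root_.enorm (σhat k)) hkL))
  refine le_trans (huoss d (L - 1)) (max_le ?_ ?_)
  · have step : cbeta * lambeta ^ (L - 1) * _root_.enorm d
        ≤ cbeta * lambeta ^ (L - 1) * (2 * max (sa * _root_.enorm e0) (sb * V)) := by
      apply mul_le_mul_of_nonneg_left hdle (by positivity)
    refine le_trans step ?_
    rcases max_choice (sa * _root_.enorm e0) (sb * V) with h | h <;> rw [h]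
    · refine le_max_of_le_left ?_
      nlinarith [mul_le_mul_of_nonneg_right hlam1 he0nn]
    · refine le_max_of_le_right ?_
      have h1 : cbeta * lambeta ^ (L - 1) * (2 * (sb * V))
          ≤ 2 * cbeta * sb * V := by
        nlinarith [mul_nonneg (mul_nonneg (mul_nonneg (by linarith : (0:ℝ) ≤ cbeta)
          (by linarith : (0:ℝ) ≤ 1 - lambeta ^ (L - 1))) hbnn) hVnn]
      refine le_trans h1 ?_
      exact mul_le_mul_of_nonneg_right (le_max_left _ _) hVnn
  · have step : cgamma * maxUpTo (L - 1) (fun k => _root_.enorm (C.mulVec ((A ^ k).mulVec d)))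
        ≤ cgamma * (2 * max (sc * _root_.enorm e0) (se * V)) :=
      mul_le_mul_of_nonneg_left (le_trans hCbound hVS) hcgamma.le
    refine le_trans step ?_
    rcases max_choice (sc * _root_.enorm e0) (se * V) with h | h <;> rw [h]
    · refine le_max_of_le_left ?_
      nlinarith [mul_le_mul_of_nonneg_right hlam2 he0nn]
    · refine le_max_of_le_right ?_
      have h1 : cgamma * (2 * (se * V)) = 2 * cgamma * se * V := by ring
      rw [h1]
      exact mul_le_mul_of_nonneg_right (le_max_right _ _) hVnn
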